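/- For every τ in the upper half-plane with Im τ ≥ √3/2, one has |(E₆(τ) − 1)/q| < 1095, where q = e^{2πiτ}. -/

import Mathlib

open Complex

noncomputable section

/-- `sigma' k n = ∑_{d ∣ n} d^k`, the sum of the k-th powers of the positive divisors of n. -/
def sigma' (k n : ℕ) : ℕ := ∑ d ∈ n.divisors, d ^ k

/-- `qpar τ = e^{2πiτ}`. -/
def qpar (τ : ℂ) : ℂ := Complex.exp (2 * Real.pi * Complex.I * τ)

/-- The quasimodular Eisenstein series `E₂(τ) = 1 - 24 ∑_{n≥1} σ₁(n) qⁿ`. -/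
def E2 (τ : ℂ) : ℂ := 1 - 24 * ∑' n : ℕ, (sigma' 1 (n + 1) : ℂ) * qpar τ ^ (n + 1)

/-- The Eisenstein series `E₄(τ) = 1 + 240 ∑_{n≥1} σ₃(n) qⁿ`. -/
def E4 (τ : ℂ) : ℂ := 1 + 240 * ∑' n : ℕ, (sigma' 3 (n + 1) : ℂ) * qpar τ ^ (n + 1)

/-- The Eisenstein series `E₆(τ) = 1 - 504 ∑_{n≥1} σ₅(n) qⁿ`. -/
def E6 (τ : ℂ) : ℂ := 1 - 504 * ∑' n : ℕ, (sigma' 5 (n + 1) : ℂ) * qpar τ ^ (n + 1)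

/-- The modular discriminant `Δ = (E₄³ - E₆²)/1728`. -/
def Δ' (τ : ℂ) : ℂ := (E4 τ ^ 3 - E6 τ ^ 2) / 1728

/-- The modular j-invariant `j = E₄³/Δ`. -/
def jinv (τ : ℂ) : ℂ := E4 τ ^ 3 / Δ' τ

/-- `χ = E₂E₄E₆/Δ`. -/
def χ' (τ : ℂ) : ℂ := E2 τ * E4 τ * E6 τ / Δ' τ

/-- `ξ = E₄E₆/Δ`. -/
def ξ' (τ : ℂ) : ℂ := E4 τ * E6 τ / Δ' τ

/-- The almost holomorphic modular function `χ*(τ) = χ(τ) - (3/(π Im τ)) ξ(τ)`. -/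
def χstar (τ : ℂ) : ℂ := χ' τ - (3 / (Real.pi * τ.im) : ℝ) * ξ' τ

/-- `τ` lies in the upper half-plane and satisfies `aτ² + bτ + c = 0` where
`a > 0` and `gcd(a,b,c) = 1`. -/
def QuadPoint (τ : ℂ) (a b c : ℤ) : Prop :=
  0 < τ.im ∧ 0 < a ∧ Int.gcd (Int.gcd a b) c = 1 ∧
    (a : ℂ) * τ ^ 2 + (b : ℂ) * τ + (c : ℂ) = 0

/-- `τ` is a quadratic point of the upper half-plane. -/
def IsQuadratic (τ : ℂ) : Prop := ∃ a b c : ℤ, QuadPoint τ a b c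

/-- `τ` is a quadratic point of discriminant `D = b² - 4ac`. -/
def HasDisc (τ : ℂ) (D : ℤ) : Prop :=
  ∃ a b c : ℤ, QuadPoint τ a b c ∧ D = b ^ 2 - 4 * a * c

/-- Membership in the closed standard fundamental domain
`F = {z ∈ ℍ : |z| ≥ 1, -1/2 ≤ Re z ≤ 1/2}`. -/
def inF (τ : ℂ) : Prop :=
  0 < τ.im ∧ 1 ≤ ‖τ‖ ∧ -(1 / 2) ≤ τ.re ∧ τ.re ≤ 1 / 2

/-- `τ` and `τ'` lie in the same `SL₂(ℤ)`-orbit under Möbius transformations. -/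
def MoebiusEquiv (τ τ' : ℂ) : Prop :=
  ∃ γ : Matrix.SpecialLinearGroup (Fin 2) ℤ,
    τ' = ((γ.1 0 0 : ℂ) * τ + (γ.1 0 1 : ℂ)) / ((γ.1 1 0 : ℂ) * τ + (γ.1 1 1 : ℂ))

/-! Bounding `σ₅(n + 1) ≤ 33 ^ n` termwise turns `(E₆ - 1) / q = -504 ∑ σ₅(n + 1) qⁿ` into a geometric
series, and `Im τ ≥ √3 / 2` gives `|q| ≤ e^{-π√3} < 1 / 62`, so `|(E₆ - 1) / q| ≤ 504 / (1 - 33 / 62) < 1095`. -/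

theorem sigma'_le_pow_succ (k m : ℕ) : sigma' k m ≤ m ^ (k + 1) :=
  calc sigma' k m ≤ m.divisors.card • m ^ k :=
        Finset.sum_le_card_nsmul _ _ _ fun d hd => Nat.pow_le_pow_left (Nat.divisor_le hd) k
    _ ≤ m • m ^ k := Nat.mul_le_mul_right _ (Nat.card_divisors_le_self m)
    _ = m ^ (k + 1) := by rw [smul_eq_mul, pow_succ']

theorem succ_pow_six_le_thirtythree_pow {n : ℕ} (hn : 2 ≤ n) : (n + 1) ^ 6 ≤ 33 ^ n := by
  induction n, hn using Nat.le_induction with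
  | base => norm_num
  | succ k hk ih =>
    -- `((k + 2) / (k + 1)) ^ 6 ≤ (4 / 3) ^ 6 < 33` for `k ≥ 2`
    have hratio : 3 ^ 6 * (k + 1 + 1) ^ 6 ≤ 4 ^ 6 * (k + 1) ^ 6 := by
      rw [← mul_pow, ← mul_pow]; exact Nat.pow_le_pow_left (by omega) 6
    calc (k + 1 + 1) ^ 6 ≤ 33 * (k + 1) ^ 6 := by omega
      _ ≤ 33 * 33 ^ k := Nat.mul_le_mul_left 33 ih
      _ = 33 ^ (k + 1) := (pow_succ' 33 k).symm

theorem sigma'_five_succ_le (n : ℕ) : sigma' 5 (n + 1) ≤ 33 ^ n := by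
  match n with
  | 0 => decide
  | 1 => decide
  | k + 2 => exact (sigma'_le_pow_succ 5 _).trans (succ_pow_six_le_thirtythree_pow (by omega))

theorem norm_tsum_mul_pow_le_of_norm_le_pow {𝕜 : Type*} [NormedField 𝕜] {a : ℕ → 𝕜} {C : ℝ}
    {q : 𝕜} (ha : ∀ n, ‖a n‖ ≤ C ^ n) (hCq : C * ‖q‖ < 1) :
    ‖∑' n, a n * q ^ n‖ ≤ (1 - C * ‖q‖)⁻¹ := by
  have hC : 0 ≤ C := (norm_nonneg _).trans (by simpa using ha 1)
  have hterm : ∀ n, ‖a n * q ^ n‖ ≤ (C * ‖q‖) ^ n := fun n => by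
    rw [norm_mul, norm_pow, mul_pow]; gcongr; exact ha n
  have hgeom : Summable fun n => (C * ‖q‖) ^ n :=
    summable_geometric_of_lt_one (by positivity) hCq
  have hsum : Summable fun n => ‖a n * q ^ n‖ := hgeom.of_nonneg_of_le (fun _ => norm_nonneg _) hterm
  calc ‖∑' n, a n * q ^ n‖ ≤ ∑' n, ‖a n * q ^ n‖ := norm_tsum_le_tsum_norm hsum
    _ ≤ ∑' n, (C * ‖q‖) ^ n := hsum.tsum_le_tsum hterm hgeom
    _ = (1 - C * ‖q‖)⁻¹ := tsum_geometric_of_lt_one (by positivity) hCq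

theorem norm_qpar (τ : ℂ) : ‖qpar τ‖ = Real.exp (-(2 * Real.pi * τ.im)) := by
  simp [qpar, Complex.norm_exp]

theorem norm_qpar_le (τ : ℂ) (hτ : Real.sqrt 3 / 2 ≤ τ.im) : ‖qpar τ‖ ≤ 1 / 62 := by
  have hsqrt3 : (1.7 : ℝ) ≤ Real.sqrt 3 := (Real.le_sqrt' (by norm_num)).2 (by norm_num)
  have hexp5 : (62 : ℝ) ≤ Real.exp 5 := by
    have he : (2.7 : ℝ) ≤ Real.exp 1 := by linarith [Real.exp_one_gt_d9]
    calc (62 : ℝ) ≤ 2.7 ^ 5 := by norm_num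
      _ ≤ Real.exp 1 ^ 5 := by gcongr
      _ = Real.exp 5 := by rw [← Real.exp_nat_mul]; norm_num
  have him : (5 : ℝ) ≤ 2 * Real.pi * τ.im :=
    calc (5 : ℝ) ≤ 3.14 * 1.7 := by norm_num
      _ ≤ Real.pi * Real.sqrt 3 := by gcongr; exact Real.pi_gt_d2.le
      _ = 2 * Real.pi * (Real.sqrt 3 / 2) := by ring
      _ ≤ 2 * Real.pi * τ.im := by gcongr
  calc ‖qpar τ‖ = Real.exp (-(2 * Real.pi * τ.im)) := norm_qpar τ
    _ ≤ Real.exp (-5) := Real.exp_le_exp.2 (by linarith)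
    _ = (Real.exp 5)⁻¹ := Real.exp_neg 5
    _ ≤ 1 / 62 := by rw [one_div]; exact inv_anti₀ (by norm_num) hexp5

theorem E6_sub_one_div_qpar (τ : ℂ) :
    (E6 τ - 1) / qpar τ = -504 * ∑' n : ℕ, (sigma' 5 (n + 1) : ℂ) * qpar τ ^ n := by
  have hq : qpar τ ≠ 0 := Complex.exp_ne_zero _
  simp_rw [E6, pow_succ, ← mul_assoc, tsum_mul_right]
  field_simp
  ring

/-- For `Im τ ≥ √3/2`, `|(E₆(τ) - 1)/q| < 1095`. -/
theorem E6_tail_bound (τ : ℂ) (hτ : Real.sqrt 3 / 2 ≤ τ.im) :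
    ‖(E6 τ - 1) / qpar τ‖ < 1095 := by
  have hq := norm_qpar_le τ hτ
  have hsigma : ∀ n, ‖(sigma' 5 (n + 1) : ℂ)‖ ≤ 33 ^ n := fun n => by
    rw [Complex.norm_natCast]; exact_mod_cast sigma'_five_succ_le n
  have hS := norm_tsum_mul_pow_le_of_norm_le_pow hsigma (by linarith)
  have hgeom : (1 - 33 * ‖qpar τ‖)⁻¹ ≤ 62 / 29 := by
    rw [← inv_div]; exact inv_anti₀ (by norm_num) (by linarith)
  calc ‖(E6 τ - 1) / qpar τ‖
        = 504 * ‖∑' n : ℕ, (sigma' 5 (n + 1) : ℂ) * qpar τ ^ n‖ := by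
          rw [E6_sub_one_div_qpar, norm_mul, norm_neg]; norm_num
    _ ≤ 504 * (62 / 29) := by gcongr; exact hS.trans hgeom
    _ < 1095 := by norm_num
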